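/- arXiv:2301.06308 — 8 statements merged into one kernel-verified Lean document; each statement's English description precedes it below -/
import Mathlib

section
/- Let H be an n×n real symmetric invertible matrix with exactly one negative eigenvalue λ₁ < 0 (all other eigenvalues being positive), and let ρ be a real number with ρ > -1/λ₁ and ρ > 0. Then H + ρH² is positive definite. -/
/-! Writing `H + ρ H² = f(H)` with `f x = x + ρ x² = x (1 + ρ x)`, the eigenvalues of `H + ρ H²`
are the `f λ`. Both factors are positive at a positive eigenvalue, and both are negative at `λ₁`
because `ρ λ₁ < -1`. -/

open scoped MatrixOrder ComplexOrder

theorem Matrix.IsHermitian.posDef_cfc_iff {n 𝕜 : Type*} [Fintype n] [DecidableEq n] [RCLike 𝕜]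
    {A : Matrix n n 𝕜} (hA : A.IsHermitian) (f : ℝ → ℝ) :
    (cfc f A).PosDef ↔ ∀ i, 0 < f (hA.eigenvalues i) := by
  rw [← isStrictlyPositive_iff_posDef,
    cfc_isStrictlyPositive_iff f A (A.finite_real_spectrum.continuousOn f),
    hA.spectrum_real_eq_range_eigenvalues, Set.forall_mem_range]

theorem IsSelfAdjoint.cfc_add_mul_sq {A : Type*} [Ring A] [StarRing A] [TopologicalSpace A]
    [Algebra ℝ A] [ContinuousFunctionalCalculus ℝ A IsSelfAdjoint] {a : A}
    (ha : IsSelfAdjoint a) (ρ : ℝ) :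
    cfc (fun x => x + ρ * x ^ 2) a = a + ρ • (a * a) := by
  rw [cfc_add .., cfc_id' .., cfc_const_mul .., cfc_pow_id .., sq]

lemma add_mul_sq_pos_of_neg {x ρ : ℝ} (hx : x < 0) (hρ : -1 / x < ρ) : 0 < x + ρ * x ^ 2 := by
  have : ρ * x < -1 := (div_lt_iff_of_neg hx).mp hρ
  nlinarith

theorem posDef_add_smul_sq_of_index_one_saddle_general {n : ℕ}
    (H : Matrix (Fin n) (Fin n) ℝ) (hH : H.IsHermitian) (ρ : ℝ)
    (i₀ : Fin n) (hneg : hH.eigenvalues i₀ < 0)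
    (hpos : ∀ j : Fin n, j ≠ i₀ → 0 < hH.eigenvalues j)
    (hρ : -1 / hH.eigenvalues i₀ < ρ) (hρ0 : 0 < ρ) :
    (H + ρ • (H * H)).PosDef := by
  rw [← hH.isSelfAdjoint.cfc_add_mul_sq, hH.posDef_cfc_iff]
  intro i
  rcases eq_or_ne i i₀ with rfl | hi
  · exact add_mul_sq_pos_of_neg hneg hρ
  · have := hpos i hi
    positivity

/-- Let `H` be an `n × n` real symmetric invertible matrix with exactly one negative
eigenvalue `λ₁ < 0` (all other eigenvalues positive), and let `ρ > -1/λ₁` with `ρ > 0`.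
Then `H + ρ H²` is positive definite. -/
theorem posDef_add_smul_sq_of_index_one_saddle {n : ℕ}
    (H : Matrix (Fin n) (Fin n) ℝ) (hH : H.IsHermitian) (hinv : IsUnit H) (ρ : ℝ)
    (i₀ : Fin n) (hneg : hH.eigenvalues i₀ < 0)
    (hpos : ∀ j : Fin n, j ≠ i₀ → 0 < hH.eigenvalues j)
    (hρ : -1 / hH.eigenvalues i₀ < ρ) (hρ0 : 0 < ρ) :
    (H + ρ • (H * H)).PosDef :=
  posDef_add_smul_sq_of_index_one_saddle_general H hH ρ i₀ hneg hpos hρ hρ0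
end

section
/- Let η > 0, B > 0, t > 0, λ < 0 and ρ > 0 with ρλ > -2 and ρλ ≠ -1. Define Δ_SGD(t) = (η|λ|/(2Bλ))(1 - exp(-2λt)) and Δ_SAM(t) = (η|λ|/(2Bλ(1+ρλ)²))(1 - exp(-2λ(1+ρλ)² t)). Then Δ_SGD(t) > Δ_SAM(t). -/
lemma exp_slope_lt {a b : ℝ} (ha : 0 < a) (hab : a < b) :
    (Real.exp a - 1) / a < (Real.exp b - 1) / b := by
  have := strictConvexOn_exp.secant_strict_mono (a := 0) (x := a) (y := b)
    (Set.mem_univ _) (Set.mem_univ _) (Set.mem_univ _) ha.ne' (ha.trans hab).ne' hab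
  simpa [Real.exp_zero] using this

/-- For `η > 0`, `B > 0`, `t > 0`, `λ < 0`, `ρ > 0` with `ρλ > -2` and `ρλ ≠ -1`,
the mean squared displacement of SGD, `Δ_SGD(t) = (η|λ|/(2Bλ))(1 - exp(-2λt))`, is
strictly larger than that of SAM,
`Δ_SAM(t) = (η|λ|/(2Bλ(1+ρλ)²))(1 - exp(-2λ(1+ρλ)² t))`. -/
theorem sam_escapes_slower_than_sgd_neg_eig (η B t lam ρ : ℝ)
    (hη : 0 < η) (hB : 0 < B) (ht : 0 < t) (hlam : lam < 0) (hρ : 0 < ρ)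
    (h2 : -2 < ρ * lam) (h1 : ρ * lam ≠ -1) :
    η * |lam| / (2 * B * lam * (1 + ρ * lam) ^ 2) *
        (1 - Real.exp (-(2 * lam * (1 + ρ * lam) ^ 2) * t)) <
      η * |lam| / (2 * B * lam) * (1 - Real.exp (-(2 * lam) * t)) := by
  set c : ℝ := (1 + ρ * lam) ^ 2 with hc
  have hne : 1 + ρ * lam ≠ 0 := by
    intro h; apply h1; linarith
  have hc0 : 0 < c := by positivity
  have hc1 : c < 1 := by
    have hlt : |1 + ρ * lam| < 1 := by
      rw [abs_lt]
      constructor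
      · linarith
      · nlinarith [mul_pos hρ (neg_pos.mpr hlam)]
    calc c = |1 + ρ * lam| ^ 2 := by rw [sq_abs]
    _ < 1 := by nlinarith [abs_nonneg (1 + ρ * lam)]
  clear_value c
  have habs : |lam| = -lam := abs_of_neg hlam
  set u₁ : ℝ := -(2 * lam * c) * t with hu1
  set u₂ : ℝ := -(2 * lam) * t with hu2
  have hu1pos : 0 < u₁ := by
    have : 0 < -lam := neg_pos.mpr hlam
    rw [hu1]; nlinarith [mul_pos (mul_pos this hc0) ht]
  have hu12 : u₁ < u₂ := by
    have : 0 < -lam := neg_pos.mpr hlam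
    rw [hu1, hu2]; nlinarith [mul_pos (mul_pos this (sub_pos.mpr hc1)) ht]
  have key := exp_slope_lt hu1pos hu12
  have hK : 0 < η * (-lam) * t / B := by
    have : 0 < -lam := neg_pos.mpr hlam
    positivity
  have hmul := mul_lt_mul_of_pos_left key hK
  have e1 : η * (-lam) * t / B * ((Real.exp u₁ - 1) / u₁) =
      η * |lam| / (2 * B * lam * c) * (1 - Real.exp (-(2 * lam * c) * t)) := by
    rw [habs, hu1, div_mul_div_comm, div_mul_eq_mul_div, div_eq_div_iff (by positivity)
      (by simp only [mul_ne_zero_iff]; exact ⟨⟨⟨two_ne_zero (α := ℝ), hB.ne'⟩, hlam.ne⟩, hc0.ne'⟩)]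
    ring
  have e2 : η * (-lam) * t / B * ((Real.exp u₂ - 1) / u₂) =
      η * |lam| / (2 * B * lam) * (1 - Real.exp (-(2 * lam) * t)) := by
    have hden : B * (-(2 * lam) * t) ≠ 0 := by
      have : 0 < -(2 * lam) * t := by nlinarith
      positivity
    rw [habs, hu2, div_mul_div_comm, div_mul_eq_mul_div, div_eq_div_iff hden
      (by simp only [mul_ne_zero_iff]; exact ⟨⟨two_ne_zero (α := ℝ), hB.ne'⟩, hlam.ne⟩)]
    ring
  rw [e1, e2] at hmul
  exact hmul
end

section
/- Let η > 0, B > 0, t > 0, λ > 0 and ρ > 0. Define Δ_SGD(t) = (η|λ|/(2Bλ))(1 - exp(-2λt)) and Δ_SAM(t) = (η|λ|/(2Bλ(1+ρλ)²))(1 - exp(-2λ(1+ρλ)² t)). Then Δ_SGD(t) > Δ_SAM(t). -/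
/-- For `η > 0`, `B > 0`, `t > 0`, `λ > 0` and `ρ > 0`, the mean squared displacement
of SGD, `Δ_SGD(t) = (η|λ|/(2Bλ))(1 - exp(-2λt))`, is strictly larger than that of SAM,
`Δ_SAM(t) = (η|λ|/(2Bλ(1+ρλ)²))(1 - exp(-2λ(1+ρλ)² t))`. -/
theorem sam_escapes_slower_than_sgd_pos_eig (η B t lam ρ : ℝ)
    (hη : 0 < η) (hB : 0 < B) (ht : 0 < t) (hlam : 0 < lam) (hρ : 0 < ρ) :
    η * |lam| / (2 * B * lam * (1 + ρ * lam) ^ 2) *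
        (1 - Real.exp (-(2 * lam * (1 + ρ * lam) ^ 2) * t)) <
      η * |lam| / (2 * B * lam) * (1 - Real.exp (-(2 * lam) * t)) := by
  set k : ℝ := (1 + ρ * lam) ^ 2 with hkdef
  have hk : 1 < k := by
    have : 1 < 1 + ρ * lam := by nlinarith
    nlinarith
  set x : ℝ := Real.exp (-(2 * lam) * t) with hx
  have hx1 : x < 1 := by
    rw [hx]
    apply Real.exp_lt_one_iff.mpr
    nlinarith
  have hxpos : 0 < x := Real.exp_pos _
  -- Bernoulli: 1 + k*(x-1) < x^k
  have hbern : 1 + k * (x - 1) < x ^ k := by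
    have h := one_add_mul_self_lt_rpow_one_add (s := x - 1) (by linarith) (by linarith) (p := k) hk
    simpa using h
  have hxk : x ^ k = Real.exp (-(2 * lam * k) * t) := by
    rw [hx, ← Real.exp_mul]
    ring_nf
  have hcore : 1 - Real.exp (-(2 * lam * k) * t) < k * (1 - x) := by
    rw [← hxk]; nlinarith
  have hc : 0 < η * |lam| / (2 * B * lam * k) := by
    have : |lam| = lam := abs_of_pos hlam
    rw [this]
    positivity
  have := mul_lt_mul_of_pos_left hcore hc
  calc η * |lam| / (2 * B * lam * k) * (1 - Real.exp (-(2 * lam * k) * t))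
      < η * |lam| / (2 * B * lam * k) * (k * (1 - x)) := this
    _ = η * |lam| / (2 * B * lam) * (1 - x) := by
        field_simp
end

section
/- Let η > 0, B > 0, λ < 0 and ρ ∈ ℝ with ρλ > -2 and ρλ ≠ -1. Define Δ_SGD(t) = (η|λ|/(2Bλ))(1 - exp(-2λt)) and Δ_SAM(t) = (η|λ|/(2Bλ(1+ρλ)²))(1 - exp(-2λ(1+ρλ)² t)). Then lim_{t → 0⁺} (Δ_SGD(t) - Δ_SAM(t)) / t² = η λ² |λ| ρ (2 + ρλ) / B; in particular this limit is positive when ρ > 0, and it equals 2η|λ|³ρ/B up to the correction factor (1 + ρλ/2). -/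
open Filter Topology Real

/-!
Both displacements have the form `c * (1 - exp (-a * t))`, and the two products `c * a`
(the initial diffusion rates) both equal `η * |λ| / B`. Hence the linear terms cancel, and by the
second-order Taylor expansion `exp x = 1 + x + x ^ 2 / 2 + O(x ^ 3)` the `t ^ 2` coefficient of
`c * (1 - exp (-a * t)) - d * (1 - exp (-b * t))` is `(d * b ^ 2 - c * a ^ 2) / 2`.
-/

lemma abs_exp_sub_one_sub_id_sub_sq_div_two_le {x : ℝ} (hx : |x| ≤ 1) :
    |exp x - 1 - x - x ^ 2 / 2| ≤ |x| ^ 3 * (2 / 9) := by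
  have h := Real.exp_bound hx (n := 3) (by norm_num)
  norm_num [Finset.sum_range_succ, Nat.factorial] at h
  convert h using 2; ring

lemma tendsto_exp_sub_one_sub_id_div_sq :
    Tendsto (fun x => (exp x - 1 - x) / x ^ 2) (𝓝[≠] 0) (𝓝 (1 / 2)) := by
  have hsmall : ∀ᶠ x in 𝓝[≠] (0 : ℝ), |x| ≤ 1 :=
    nhdsWithin_le_nhds (eventually_abs_sub_lt 0 one_pos |>.mono fun x hx => by simpa using hx.le)
  rw [tendsto_iff_norm_sub_tendsto_zero]
  refine squeeze_zero' (Eventually.of_forall fun _ => norm_nonneg _) ?_ ?_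
    (g := fun x => |x| * (2 / 9))
  · filter_upwards [hsmall, self_mem_nhdsWithin] with x hx (hx0 : x ≠ 0)
    have hsq : (0 : ℝ) < x ^ 2 := by positivity
    calc ‖(exp x - 1 - x) / x ^ 2 - 1 / 2‖ = |exp x - 1 - x - x ^ 2 / 2| / x ^ 2 := by
          rw [Real.norm_eq_abs, ← abs_of_pos hsq, ← abs_div, abs_of_pos hsq]
          congr 1; field_simp
      _ ≤ |x| ^ 3 * (2 / 9) / x ^ 2 := by
          gcongr; exact abs_exp_sub_one_sub_id_sub_sq_div_two_le hx
      _ = |x| * (2 / 9) := by rw [← sq_abs]; field_simp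
  · have hcont : Continuous fun x : ℝ => |x| * (2 / 9) := by fun_prop
    simpa using (hcont.tendsto 0).mono_left nhdsWithin_le_nhds

lemma tendsto_exp_neg_mul_sub_one_add_div_sq (a : ℝ) :
    Tendsto (fun t => (exp (-a * t) - 1 + a * t) / t ^ 2) (𝓝[≠] 0) (𝓝 (a ^ 2 / 2)) := by
  rcases eq_or_ne a 0 with rfl | ha
  · simp
  have hscale : Tendsto (fun t : ℝ => -a * t) (𝓝[≠] 0) (𝓝[≠] 0) := by
    refine tendsto_nhdsWithin_of_tendsto_nhds_of_eventually_within _ ?_ ?_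
    · simpa using ((continuous_const_mul (-a)).tendsto 0).mono_left nhdsWithin_le_nhds
    · filter_upwards [self_mem_nhdsWithin] with t (ht : t ≠ 0)
      simpa using And.intro ha ht
  have := (tendsto_exp_sub_one_sub_id_div_sq.comp hscale).const_mul (a ^ 2)
  rw [mul_one_div] at this
  refine this.congr' ?_
  filter_upwards [self_mem_nhdsWithin] with t (ht : t ≠ 0)
  simp only [Function.comp_apply]
  field_simp
  ring

lemma tendsto_exp_relaxation_gap_div_sq {a b c d : ℝ} (h : c * a = d * b) :
    Tendsto (fun t => (c * (1 - exp (-a * t)) - d * (1 - exp (-b * t))) / t ^ 2)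
      (𝓝[≠] 0) (𝓝 ((d * b ^ 2 - c * a ^ 2) / 2)) := by
  have := ((tendsto_exp_neg_mul_sub_one_add_div_sq b).const_mul d).sub
    ((tendsto_exp_neg_mul_sub_one_add_div_sq a).const_mul c)
  rw [mul_div_assoc', mul_div_assoc', ← sub_div] at this
  refine this.congr' ?_
  filter_upwards [self_mem_nhdsWithin] with t (ht : t ≠ 0)
  field_simp
  linear_combination (-t) * h

/-- For `η > 0`, `B > 0`, `λ < 0`, `ρ` with `ρλ > -2` and `ρλ ≠ -1`, the difference of
mean squared displacements satisfies
`lim_{t → 0⁺} (Δ_SGD(t) - Δ_SAM(t)) / t² = η λ² |λ| ρ (2 + ρλ) / B`; in particular this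
limit is positive when `ρ > 0`, and it equals `2η|λ|³ρ/B` up to the correction factor
`(1 + ρλ/2)`. -/
theorem sgd_sam_msd_gap_second_order (η B lam ρ : ℝ)
    (hη : 0 < η) (hB : 0 < B) (hlam : lam < 0)
    (h2 : -2 < ρ * lam) (h1 : ρ * lam ≠ -1) :
    Tendsto
      (fun t : ℝ =>
        (η * |lam| / (2 * B * lam) * (1 - Real.exp (-(2 * lam) * t)) -
          η * |lam| / (2 * B * lam * (1 + ρ * lam) ^ 2) *
            (1 - Real.exp (-(2 * lam * (1 + ρ * lam) ^ 2) * t))) / t ^ 2)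
      (nhdsWithin 0 (Set.Ioi 0))
      (nhds (η * lam ^ 2 * |lam| * ρ * (2 + ρ * lam) / B)) ∧
    (0 < ρ → 0 < η * lam ^ 2 * |lam| * ρ * (2 + ρ * lam) / B) ∧
    η * lam ^ 2 * |lam| * ρ * (2 + ρ * lam) / B =
      2 * η * |lam| ^ 3 * ρ / B * (1 + ρ * lam / 2) := by
  have hlam0 : lam ≠ 0 := hlam.ne
  -- stated with `lam * ρ`, the form in which `field_simp` looks for it
  have hsam : 1 + lam * ρ ≠ 0 := fun h => h1 (by linarith)
  refine ⟨?_, fun hρ => ?_, ?_⟩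
  · have hgap := tendsto_exp_relaxation_gap_div_sq
      (a := 2 * lam) (b := 2 * lam * (1 + ρ * lam) ^ 2)
      (c := η * |lam| / (2 * B * lam)) (d := η * |lam| / (2 * B * lam * (1 + ρ * lam) ^ 2))
      (by field_simp)
    convert hgap.mono_left (nhdsWithin_mono _ fun t (ht : t ∈ Set.Ioi 0) => ne_of_gt ht) using 2
    field_simp
    ring
  · have : 0 < 2 + ρ * lam := by linarith
    have : 0 < |lam| := abs_pos.mpr hlam0
    positivity
  · rw [← sq_abs]
    ring
end

section
/- Let η > 0, B > 0, t > 0 and λ < 0. On the interval ρ ∈ (0, -1/λ), the function ρ ↦ Δ_SAM(ρ) := (η|λ|/(2Bλ(1+ρλ)²))(1 - exp(-2λ(1+ρλ)² t)) is strictly decreasing in ρ. -/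
/-- Slope inequality for `exp`: for `0 < y < x`, `(exp y - 1)/y < (exp x - 1)/x`,
in cross-multiplied form. -/
lemma exp_slope_lt_s11 {x y : ℝ} (hy : 0 < y) (hxy : y < x) :
    (Real.exp y - 1) * x < (Real.exp x - 1) * y := by
  have h := strictConvexOn_exp.slope_strict_mono_adjacent (Set.mem_univ 0)
    (Set.mem_univ x) hy hxy
  simp only [Real.exp_zero, sub_zero] at h
  have hx : 0 < x := hy.trans hxy
  rw [div_lt_div_iff₀ hy (by linarith)] at h
  nlinarith

/-- For `η > 0`, `B > 0`, `t > 0` and `λ < 0`, the SAM mean squared displacement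
`ρ ↦ Δ_SAM(ρ) = (η|λ|/(2Bλ(1+ρλ)²))(1 - exp(-2λ(1+ρλ)² t))` is strictly decreasing in
`ρ` on the interval `(0, -1/λ)`. -/
theorem sam_msd_strictAnti_in_rho (η B t lam : ℝ)
    (hη : 0 < η) (hB : 0 < B) (ht : 0 < t) (hlam : lam < 0) :
    StrictAntiOn
      (fun ρ : ℝ =>
        η * |lam| / (2 * B * lam * (1 + ρ * lam) ^ 2) *
          (1 - Real.exp (-(2 * lam * (1 + ρ * lam) ^ 2) * t)))
      (Set.Ioo 0 (-1 / lam)) := by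
  intro p hp q hq hpq
  have hlam' : lam ≠ 0 := ne_of_lt hlam
  have habs : |lam| = -lam := abs_of_neg hlam
  set a : ℝ := -(2 * lam * t) with ha_def
  have ha : 0 < a := by simp only [ha_def]; nlinarith
  -- v = 1 + q*lam, u = 1 + p*lam, 0 < v < u
  have hv : 0 < 1 + q * lam := by
    have h1 : q * lam > (-1 / lam) * lam := mul_lt_mul_of_neg_right hq.2 hlam
    have h2 : (-1 / lam) * lam = -1 := by field_simp
    linarith [h1, h2.symm ▸ h1]
  have huv : 1 + q * lam < 1 + p * lam := by nlinarith [hpq, hlam]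
  set c1 : ℝ := (1 + p * lam) ^ 2 with hc1_def
  set c2 : ℝ := (1 + q * lam) ^ 2 with hc2_def
  have hc2 : 0 < c2 := by positivity
  have hc12 : c2 < c1 := by nlinarith
  have hc1 : 0 < c1 := hc2.trans hc12
  have key := exp_slope_lt_s11 (x := a * c1) (y := a * c2)
    (by positivity) (by nlinarith)
  simp only [habs]
  have earg1 : -(2 * lam * c1) * t = a * c1 := by rw [ha_def]; ring
  have earg2 : -(2 * lam * c2) * t = a * c2 := by rw [ha_def]; ring
  rw [earg1, earg2]
  have e1 : η * -lam / (2 * B * lam * c1) * (1 - Real.exp (a * c1)) =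
      η * (Real.exp (a * c1) - 1) / (2 * B * c1) := by
    field_simp
    ring
  have e2 : η * -lam / (2 * B * lam * c2) * (1 - Real.exp (a * c2)) =
      η * (Real.exp (a * c2) - 1) / (2 * B * c2) := by
    field_simp
    ring
  rw [e1, e2, div_lt_div_iff₀ (by positivity) (by positivity)]
  have key2 : (Real.exp (a * c2) - 1) * c1 < (Real.exp (a * c1) - 1) * c2 := by
    have h' : a * ((Real.exp (a * c2) - 1) * c1) < a * ((Real.exp (a * c1) - 1) * c2) := by
      nlinarith [key]
    exact lt_of_mul_lt_mul_left h' ha.le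
  nlinarith [mul_lt_mul_of_pos_left key2 (by positivity : (0:ℝ) < 2 * B * η)]
end

section
/- Let C₂ > 0. The function h(γ) = (1 - e^{-C₂(1-γ)})² / (1-γ)³ is strictly increasing on the interval [0, 1). -/
/-!
Substituting `u = 1 - γ`, it suffices that `(1 - e^{-C₂ u})² / u³` decreases strictly on `u > 0`.
Write it as `g(u)² / u` with `g(u) = (1 - e^{-C₂ u}) / u`: `g` is minus the slope of the secant of
the convex function `u ↦ e^{-C₂ u}` through `0`, hence positive and antitone, while `1 / u`
decreases strictly.
-/

open Real Set

theorem convexOn_exp_neg_mul (c : ℝ) : ConvexOn ℝ univ fun u : ℝ => exp (-(c * u)) := by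
  simpa [Function.comp_def] using convexOn_exp.comp_linearMap (LinearMap.mul ℝ ℝ (-c))

theorem antitoneOn_one_sub_exp_neg_mul_div (c : ℝ) :
    AntitoneOn (fun u : ℝ => (1 - exp (-(c * u))) / u) (Ioi 0) := by
  intro x hx y hy hxy
  have secant := (convexOn_exp_neg_mul c).secant_mono (mem_univ 0) (mem_univ x) (mem_univ y)
    (ne_of_gt hx) (ne_of_gt hy) hxy
  simp only [mul_zero, neg_zero, exp_zero, sub_zero] at secant
  simpa only [← neg_div, neg_sub] using neg_le_neg secant

theorem one_sub_exp_neg_mul_div_pos {c u : ℝ} (hc : 0 < c) (hu : 0 < u) :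
    0 < (1 - exp (-(c * u))) / u := by
  have : exp (-(c * u)) < 1 := exp_lt_one_iff.mpr (by nlinarith)
  exact div_pos (by linarith) hu

theorem strictAntiOn_pow_div_of_antitoneOn {g : ℝ → ℝ} (n : ℕ) (hg : AntitoneOn g (Ioi 0))
    (hpos : ∀ u ∈ Ioi (0 : ℝ), 0 < g u) : StrictAntiOn (fun u => g u ^ n / u) (Ioi 0) := by
  intro x hx y hy hxy
  have hx0 : (0 : ℝ) < x := hx
  have hgy := hpos y hy
  calc g y ^ n / y < g y ^ n / x := div_lt_div_of_pos_left (by positivity) hx0 hxy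
    _ ≤ g x ^ n / x := by gcongr; exact hg hx hy hxy.le

theorem strictAntiOn_one_sub_exp_neg_mul_sq_div_cube {c : ℝ} (hc : 0 < c) :
    StrictAntiOn (fun u : ℝ => (1 - exp (-(c * u))) ^ 2 / u ^ 3) (Ioi 0) := by
  refine (strictAntiOn_pow_div_of_antitoneOn 2 (antitoneOn_one_sub_exp_neg_mul_div c)
    fun u hu => one_sub_exp_neg_mul_div_pos hc hu).congr fun u (hu : 0 < u) => ?_
  field_simp

/-- For `C₂ > 0`, the function `h(γ) = (1 - e^{-C₂(1-γ)})² / (1-γ)³` is strictly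
increasing on `[0, 1)`. -/
theorem momentum_factor_first_term_strictMono (C₂ : ℝ) (hC₂ : 0 < C₂) :
    StrictMonoOn
      (fun γ : ℝ => (1 - Real.exp (-(C₂ * (1 - γ)))) ^ 2 / (1 - γ) ^ 3)
      (Set.Ico 0 1) :=
  StrictAntiOn.comp (strictAntiOn_one_sub_exp_neg_mul_sq_div_cube hC₂)
    (f := fun γ => 1 - γ) (fun _ _ _ _ hxy => by linarith) fun _ hγ => sub_pos.mpr hγ.2
end

section
/- Let C₄ > 0. The function g(γ) = (1 - e^{-C₄/(1-γ)}) / (1-γ) is strictly increasing on the interval [0, 1). -/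
/-- For `C₄ > 0`, the function `g(γ) = (1 - e^{-C₄/(1-γ)}) / (1-γ)` is strictly
increasing on `[0, 1)`. -/
theorem momentum_factor_second_term_strictMono (C₄ : ℝ) (hC₄ : 0 < C₄) :
    StrictMonoOn
      (fun γ : ℝ => (1 - Real.exp (-(C₄ / (1 - γ)))) / (1 - γ))
      (Set.Ico 0 1) := by
  intro a ha b hb hab
  simp only
  have hsa : 0 < 1 - a := by linarith [ha.2]
  have hsb : 0 < 1 - b := by linarith [hb.2]
  have hss : 1 - b < 1 - a := by linarith
  have hdiv : C₄ / (1 - a) < C₄ / (1 - b) := div_lt_div_of_pos_left hC₄ hsb hss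
  have hexp : Real.exp (-(C₄ / (1 - b))) < Real.exp (-(C₄ / (1 - a))) :=
    Real.exp_lt_exp.2 (by linarith)
  have he1 : Real.exp (-(C₄ / (1 - a))) < 1 := by
    rw [Real.exp_lt_one_iff]
    have : 0 < C₄ / (1 - a) := div_pos hC₄ hsa
    linarith
  rw [div_lt_div_iff₀ hsa hsb]
  nlinarith [hexp, hss, he1]
end

section
/- Let C₁, C₂, C₃, C₄ be positive reals and define Δ_SAM(γ, B) = C₁(1 - e^{-C₂(1-γ)})² / ((1-γ)³ B) + C₃(1 - e^{-C₄/(1-γ)}) / ((1-γ) B) for momentum γ ∈ [0,1) and batch size B > 0. Then Δ_SAM is strictly increasing in γ for each fixed B > 0, and strictly decreasing in B for each fixed γ ∈ [0,1). -/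
/-!
Writing `u = 1 - γ`, the displacement is `Φ(u) / B` with
`Φ(u) = C₁ (1 - e^{-C₂ u})² / u³ + C₃ (1 - e^{-C₄ / u}) / u` positive, so it suffices that `Φ`
strictly decreases on `u > 0`. In the second term the numerator decreases and `1 / u` strictly
decreases. The first term is `C₂² g(C₂ u)² / u` with `g(x) = (1 - e^{-x}) / x`, and `g` decreases
because it is the slope of the convex function `exp` between `-x` and `0`.
-/

open Real Set

theorem strictAntiOn_one_sub_exp_neg_div :
    StrictAntiOn (fun x : ℝ => (1 - exp (-x)) / x) (Ioi 0) := by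
  intro a ha b hb hab
  have hsecant := strictConvexOn_exp.secant_strict_mono (mem_univ 0) (mem_univ (-b))
    (mem_univ (-a)) (by linarith [mem_Ioi.1 hb]) (by linarith [mem_Ioi.1 ha]) (neg_lt_neg hab)
  simpa only [exp_zero, sub_zero, ← neg_sub (1 : ℝ), neg_div_neg_eq] using hsecant

theorem one_sub_exp_neg_pos {x : ℝ} (hx : 0 < x) : 0 < 1 - exp (-x) :=
  sub_pos.2 (exp_lt_one_iff.2 (neg_neg_of_pos hx))

theorem strictAntiOn_one_sub_exp_neg_mul_sq_div_pow_three {C : ℝ} (hC : 0 < C) :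
    StrictAntiOn (fun u : ℝ => (1 - exp (-(C * u))) ^ 2 / u ^ 3) (Ioi 0) := by
  intro a (ha : 0 < a) b (hb : 0 < b) hab
  have hCb : 0 < C * b := by positivity
  have hpos : 0 < (1 - exp (-(C * b))) / (C * b) := div_pos (one_sub_exp_neg_pos hCb) hCb
  have hlt := strictAntiOn_one_sub_exp_neg_div (mem_Ioi.2 (by positivity : 0 < C * a))
    (mem_Ioi.2 hCb) (by gcongr)
  calc (1 - exp (-(C * b))) ^ 2 / b ^ 3 = C ^ 2 * ((1 - exp (-(C * b))) / (C * b)) ^ 2 / b := by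
        field_simp
    _ < C ^ 2 * ((1 - exp (-(C * a))) / (C * a)) ^ 2 / a := by gcongr
    _ = (1 - exp (-(C * a))) ^ 2 / a ^ 3 := by field_simp

theorem strictAntiOn_one_sub_exp_neg_div_div {C : ℝ} (hC : 0 < C) :
    StrictAntiOn (fun u : ℝ => (1 - exp (-(C / u))) / u) (Ioi 0) := by
  intro a (ha : 0 < a) b (hb : 0 < b) hab
  refine div_lt_div₀' ?_ hab (one_sub_exp_neg_pos (by positivity)) ha
  gcongr

/-- `B · Δ_SAM` as a function of `u = 1 - γ`. -/
noncomputable def samDisplacement (C₁ C₂ C₃ C₄ u : ℝ) : ℝ :=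
  C₁ * (1 - exp (-(C₂ * u))) ^ 2 / u ^ 3 + C₃ * (1 - exp (-(C₄ / u))) / u

section

variable {C₁ C₂ C₃ C₄ : ℝ} (hC₁ : 0 < C₁) (hC₂ : 0 < C₂) (hC₃ : 0 < C₃) (hC₄ : 0 < C₄)
include hC₁ hC₂ hC₃ hC₄

theorem samDisplacement_pos {u : ℝ} (hu : 0 < u) : 0 < samDisplacement C₁ C₂ C₃ C₄ u := by
  have h₂ := one_sub_exp_neg_pos (mul_pos hC₂ hu)
  have h₄ := one_sub_exp_neg_pos (div_pos hC₄ hu)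
  unfold samDisplacement
  positivity

theorem strictAntiOn_samDisplacement :
    StrictAntiOn (samDisplacement C₁ C₂ C₃ C₄) (Ioi 0) := by
  intro a ha b hb hab
  have h₂ := strictAntiOn_one_sub_exp_neg_mul_sq_div_pow_three hC₂ ha hb hab
  have h₄ := strictAntiOn_one_sub_exp_neg_div_div hC₄ ha hb hab
  simp only [samDisplacement, mul_div_assoc] at h₂ h₄ ⊢
  gcongr

end

/-- For positive constants `C₁, C₂, C₃, C₄`, the SAM mean squared displacement
`Δ_SAM(γ, B) = C₁(1 - e^{-C₂(1-γ)})²/((1-γ)³ B) + C₃(1 - e^{-C₄/(1-γ)})/((1-γ) B)` is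
strictly increasing in the momentum `γ ∈ [0,1)` for each fixed batch size `B > 0`, and
strictly decreasing in `B > 0` for each fixed `γ ∈ [0,1)`. -/
theorem sam_msd_momentum_batchsize (C₁ C₂ C₃ C₄ : ℝ)
    (hC₁ : 0 < C₁) (hC₂ : 0 < C₂) (hC₃ : 0 < C₃) (hC₄ : 0 < C₄) :
    (∀ B : ℝ, 0 < B →
      StrictMonoOn
        (fun γ : ℝ =>
          C₁ * (1 - Real.exp (-(C₂ * (1 - γ)))) ^ 2 / ((1 - γ) ^ 3 * B) +
            C₃ * (1 - Real.exp (-(C₄ / (1 - γ)))) / ((1 - γ) * B))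
        (Set.Ico 0 1)) ∧
    (∀ γ : ℝ, γ ∈ Set.Ico (0 : ℝ) 1 →
      StrictAntiOn
        (fun B : ℝ =>
          C₁ * (1 - Real.exp (-(C₂ * (1 - γ)))) ^ 2 / ((1 - γ) ^ 3 * B) +
            C₃ * (1 - Real.exp (-(C₄ / (1 - γ)))) / ((1 - γ) * B))
        (Set.Ioi 0)) := by
  have hΔ (γ B : ℝ) :
      C₁ * (1 - exp (-(C₂ * (1 - γ)))) ^ 2 / ((1 - γ) ^ 3 * B) +
          C₃ * (1 - exp (-(C₄ / (1 - γ)))) / ((1 - γ) * B) =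
        samDisplacement C₁ C₂ C₃ C₄ (1 - γ) / B := by
    rw [samDisplacement, add_div, div_div, div_div]
  simp only [hΔ]
  constructor
  · intro B hB γ₁ hγ₁ γ₂ hγ₂ hγ
    have hanti := strictAntiOn_samDisplacement hC₁ hC₂ hC₃ hC₄
      (mem_Ioi.2 (sub_pos.2 hγ₂.2)) (mem_Ioi.2 (sub_pos.2 hγ₁.2)) (sub_lt_sub_left hγ 1)
    exact div_lt_div_of_pos_right hanti hB
  · intro γ hγ B₁ hB₁ B₂ _ hB
    exact div_lt_div_of_pos_left (samDisplacement_pos hC₁ hC₂ hC₃ hC₄ (sub_pos.2 hγ.2)) hB₁ hB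
end
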